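/- Let k ≥ 1, d ≥ 3, n ≥ k(d-1)+2, and let G attain the maximum connective eccentricity index among all k-connected graphs of order n with diameter d. Let u_0 u_1 ⋯ u_d be a diametral path in G and A_d = {v ∈ V(G) : d_G(v, u_0) = d}. Then |A_d| = 1. -/

import Mathlib

/-!
Suppose `v ≠ w` both lie at distance `d` from `u₀`. If they are not adjacent, add the edge `vw`;
if they are, add an edge from `v` to a vertex at distance `d - 2` from `u₀`. In both cases some
vertex is still at distance `d` from `u₀`, so the new graph is again `k`-connected of diameter
`d`. But adding an edge raises a degree and lowers no eccentricity, so it strictly increases the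
connective eccentricity index, contradicting the maximality of `G`.
-/

open Finset
open scoped Classical

namespace CEI

variable {V : Type*}

/-- Degree of a vertex. -/
noncomputable def deg [Fintype V] (G : SimpleGraph V) (v : V) : ℕ :=
  (Finset.univ.filter fun u => G.Adj v u).card

/-- Eccentricity of a vertex. -/
noncomputable def ecc [Fintype V] (G : SimpleGraph V) (v : V) : ℕ :=
  Finset.univ.sup fun u => G.dist v u

/-- Connective eccentricity index. -/
noncomputable def cei [Fintype V] (G : SimpleGraph V) : ℝ :=
  ∑ v : V, (deg G v : ℝ) / (ecc G v)

/-- Diameter. -/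
noncomputable def diam [Fintype V] (G : SimpleGraph V) : ℕ :=
  Finset.univ.sup fun v => ecc G v

/-- `G` is `k`-connected: removing fewer than `k` vertices leaves a
connected graph with more than one vertex. -/
def KConnected [Fintype V] (k : ℕ) (G : SimpleGraph V) : Prop :=
  ∀ A : Finset V, A.card < k →
    (G.induce ((A : Set V)ᶜ)).Connected ∧ 1 < ((A : Set V)ᶜ).ncard

/-- A set of pairwise non-adjacent vertices. -/
def IsIndepSet (G : SimpleGraph V) (s : Set V) : Prop :=
  s.Pairwise fun u v => ¬ G.Adj u v

/-- Independence number. -/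
noncomputable def indepNum [Fintype V] (G : SimpleGraph V) : ℕ :=
  Finset.univ.sup fun s : Finset V => if IsIndepSet G ↑s then s.card else 0

/-- A vertex cut: deleting `A` disconnects `G`. -/
def IsVertexCut (G : SimpleGraph V) (A : Finset V) : Prop :=
  ¬ (G.induce ((A : Set V)ᶜ)).Preconnected

/-- Sequential join of complete graphs with part sizes `cs`. -/
def seqCompleteJoin (cs : List ℕ) : SimpleGraph ((i : Fin cs.length) × Fin (cs.get i)) where
  Adj x y := x ≠ y ∧ (x.1.val = y.1.val ∨ x.1.val + 1 = y.1.val ∨ y.1.val + 1 = x.1.val)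
  symm := ⟨fun x y ⟨h1, h2⟩ => ⟨h1.symm, by tauto⟩⟩
  loopless := ⟨fun x ⟨h, _⟩ => h rfl⟩

/-- `K_k ∨ (K_a ∪ K_b)`. -/
def KJoin2 (k a b : ℕ) : SimpleGraph (Fin (k + a + b)) where
  Adj x y := x ≠ y ∧ (x.val < k ∨ y.val < k ∨ (x.val < k + a ↔ y.val < k + a))
  symm := ⟨fun x y ⟨h1, h2⟩ => ⟨h1.symm, by tauto⟩⟩
  loopless := ⟨fun x ⟨h, _⟩ => h rfl⟩

/-- `K_b ∨ a K_1`. -/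
def splitGraph (b a : ℕ) : SimpleGraph (Fin (b + a)) where
  Adj x y := x ≠ y ∧ (x.val < b ∨ y.val < b)
  symm := ⟨fun x y ⟨h1, h2⟩ => ⟨h1.symm, by tauto⟩⟩
  loopless := ⟨fun x ⟨h, _⟩ => h rfl⟩

/-- `S_{n,α} = K_k ∨ (K_1 ∪ (K_{n-k-α} ∨ (α-1)K_1))`; vertices `0,…,k-1` form the
clique `K_k` joined to everything, vertex `k` is the isolated-ish `K_1`, vertices
`k+1,…,n-α` form `K_{n-k-α}`, and vertices `n-α+1,…,n-1` are the `α-1` independent ones. -/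
def Sgraph (n k a : ℕ) : SimpleGraph (Fin n) where
  Adj x y := x ≠ y ∧ (x.val < k ∨ y.val < k ∨
    (x.val ≠ k ∧ y.val ≠ k ∧ ¬(n + 1 - a ≤ x.val ∧ n + 1 - a ≤ y.val)))
  symm := ⟨fun x y ⟨h1, h2⟩ => ⟨h1.symm, by tauto⟩⟩
  loopless := ⟨fun x ⟨h, _⟩ => h rfl⟩

end CEI

namespace SimpleGraph

variable {V : Type*} {G : SimpleGraph V}

lemma exists_dist_eq_of_le_dist {u v : V} (h : G.Reachable u v) {i : ℕ} (hi : i ≤ G.dist u v) :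
    ∃ x, G.dist u x = i := by
  obtain ⟨p, hp⟩ := h.exists_walk_length_eq_dist
  refine ⟨p.getVert i, le_antisymm ?_ ?_⟩
  · simpa [hp, hi] using dist_le (p.take i)
  · have hdrop : G.dist (p.getVert i) v ≤ G.dist u v - i := by
      simpa [hp] using dist_le (p.drop i)
    have := (p.take i).reachable.dist_triangle_left v
    omega

/-- The three terms bound the walks that avoid the new edge, cross it from `x` to `y`, and
cross it from `y` to `x`. -/
lemma Connected.min_dist_le_length_of_walk_sup_edge (hG : G.Connected) {x y a b : V}
    (p : (G ⊔ edge x y).Walk a b) :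
    min (G.dist a b) (min (G.dist a x + 1 + G.dist y b) (G.dist a y + 1 + G.dist x b))
      ≤ p.length := by
  induction p with
  | nil => simp
  | @cons a c b h p ih =>
    rw [Walk.length_cons]
    rcases (sup_adj _ _ _ _).1 h with hadj | hedge
    · have := dist_eq_one_iff_adj.2 hadj
      have := hG.dist_triangle (u := a) (v := c) (w := b)
      have := hG.dist_triangle (u := a) (v := c) (w := x)
      have := hG.dist_triangle (u := a) (v := c) (w := y)
      omega
    · rcases (edge_adj _ _ _ _).1 hedge with ⟨⟨rfl, rfl⟩ | ⟨rfl, rfl⟩, -⟩ <;>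
        simp only [dist_self, dist_comm (u := c)] at ih ⊢ <;> omega

lemma Connected.min_dist_le_dist_sup_edge (hG : G.Connected) (x y a b : V) :
    min (G.dist a b) (min (G.dist a x + 1 + G.dist y b) (G.dist a y + 1 + G.dist x b))
      ≤ (G ⊔ edge x y).dist a b := by
  obtain ⟨p, hp⟩ := ((hG a b).mono le_sup_left).exists_walk_length_eq_dist
  exact hp ▸ hG.min_dist_le_length_of_walk_sup_edge p

lemma Connected.exists_sup_edge_le_dist (hG : G.Connected) {d : ℕ} (hd : 2 ≤ d) {a v w : V}
    (hv : G.dist a v = d) (hw : G.dist a w = d) (hvw : v ≠ w) :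
    ∃ x y, x ≠ y ∧ ¬ G.Adj x y ∧ ∃ b, d ≤ (G ⊔ edge x y).dist a b := by
  by_cases hadj : G.Adj v w
  · -- a shortcut from `v` back to level `d - 2` still leaves `w` at distance `d`
    obtain ⟨q, hq⟩ := exists_dist_eq_of_le_dist (hG a v) (i := d - 2) (by omega)
    have hvq : ¬ G.Adj v q := fun h => by
      have := dist_eq_one_iff_adj.2 h.symm
      have := hG.dist_triangle (u := a) (v := q) (w := v)
      omega
    refine ⟨v, q, fun h => ?_, hvq, w, ?_⟩
    · subst h
      omega
    · have := dist_eq_one_iff_adj.2 hadj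
      have := hG.min_dist_le_dist_sup_edge v q a w
      omega
  · refine ⟨v, w, hvw, hadj, v, ?_⟩
    have := hG.min_dist_le_dist_sup_edge v w a v
    omega

end SimpleGraph

open SimpleGraph (edge)

namespace CEI

section Monotonicity

variable {V : Type*} [Fintype V] {G H : SimpleGraph V} {k : ℕ}

lemma deg_mono (h : G ≤ H) (v : V) : deg G v ≤ deg H v :=
  card_le_card (monotone_filter_right _ fun _ _ hu => h hu)

lemma deg_lt_deg (h : G ≤ H) {v w : V} (hH : H.Adj v w) (hG : ¬ G.Adj v w) :
    deg G v < deg H v :=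
  card_lt_card ((ssubset_iff_of_subset (monotone_filter_right _ fun _ _ hu => h hu)).2
    ⟨w, by simpa using hH, by simpa using hG⟩)

lemma dist_le_ecc (G : SimpleGraph V) (v u : V) : G.dist v u ≤ ecc G v :=
  le_sup (mem_univ u)

lemma dist_le_diam (G : SimpleGraph V) (v u : V) : G.dist v u ≤ diam G :=
  (dist_le_ecc G v u).trans (le_sup (f := fun v => ecc G v) (mem_univ v))

lemma ecc_pos [Nontrivial V] (hG : G.Connected) (v : V) : 0 < ecc G v := by
  obtain ⟨u, hu⟩ := exists_ne v
  exact (hG.pos_dist_of_ne hu.symm).trans_le (dist_le_ecc G v u)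

lemma ecc_anti (h : G ≤ H) (hG : G.Connected) (v : V) : ecc H v ≤ ecc G v :=
  sup_mono_fun fun u _ => (hG v u).dist_anti h

lemma diam_anti (h : G ≤ H) (hG : G.Connected) : diam H ≤ diam G :=
  sup_mono_fun fun v _ => ecc_anti h hG v

lemma cei_lt_cei [Nontrivial V] (hG : G.Connected) (h : G < H) : cei G < cei H := by
  have hH : H.Connected := hG.mono h.le
  obtain ⟨v, w, hHvw, hGvw⟩ : ∃ v w, H.Adj v w ∧ ¬ G.Adj v w := by
    by_contra! hle
    exact h.not_ge fun v w => hle v w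
  refine sum_lt_sum (fun u _ => ?_) ⟨v, mem_univ v, ?_⟩
  · exact div_le_div₀ (by positivity) (by exact_mod_cast deg_mono h.le u)
      (by exact_mod_cast ecc_pos hH u) (by exact_mod_cast ecc_anti h.le hG u)
  · exact div_lt_div₀ (by exact_mod_cast deg_lt_deg h.le hHvw hGvw)
      (by exact_mod_cast ecc_anti h.le hG v) (by positivity) (by exact_mod_cast ecc_pos hH v)

lemma KConnected.mono (h : G ≤ H) (hG : KConnected k G) : KConnected k H := fun A hA =>
  ⟨(hG A hA).1.mono fun _ _ hab => h hab, (hG A hA).2⟩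

lemma KConnected.connected (hk : 0 < k) (hG : KConnected k G) : G.Connected := by
  have h := (hG ∅ (by simpa using hk)).1
  rw [coe_empty, Set.compl_empty] at h
  exact (SimpleGraph.induceUnivIso G).connected_iff.mp h

lemma KConnected.nontrivial (hk : 0 < k) (hG : KConnected k G) : Nontrivial V := by
  have h := (hG ∅ (by simpa using hk)).2
  rw [coe_empty, Set.compl_empty, Set.ncard_univ] at h
  exact Finite.one_lt_card_iff_nontrivial.mp h

end Monotonicity

/-- Otherwise `G ⊔ edge x y` would be a competitor of larger index, by `cei_lt_cei`. -/
lemma dist_sup_edge_lt_of_forall_cei_le {V : Type} [Fintype V] {G : SimpleGraph V} {k d : ℕ}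
    (hk : 0 < k) (hconn : KConnected k G) (hdiam : diam G = d)
    (hmax : ∀ (W : Type) [Fintype W] (H : SimpleGraph W),
      Fintype.card W = Fintype.card V → KConnected k H → diam H = d → cei H ≤ cei G)
    {x y : V} (hxy : x ≠ y) (hnadj : ¬ G.Adj x y) (a b : V) :
    (G ⊔ edge x y).dist a b < d := by
  have hG := hconn.connected hk
  have := hconn.nontrivial hk
  have hlt : G < G ⊔ edge x y := SimpleGraph.lt_sup_edge _ _ _ hxy hnadj
  have hdiam_le : diam (G ⊔ edge x y) ≤ d := hdiam ▸ diam_anti hlt.le hG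
  refine ((dist_le_diam _ a b).trans hdiam_le).lt_of_ne fun hab => ?_
  have hdiam' : diam (G ⊔ edge x y) = d := hdiam_le.antisymm (hab ▸ dist_le_diam _ a b)
  exact (cei_lt_cei hG hlt).not_ge (hmax V _ rfl (hconn.mono hlt.le) hdiam')

theorem last_level_set_singleton_general {V : Type} [Fintype V] (G : SimpleGraph V) (k d n : ℕ)
    (hk : 1 ≤ k) (hd : 3 ≤ d)
    (hcard : Fintype.card V = n) (hconn : KConnected k G) (hdiam : diam G = d)
    (hmax : ∀ (W : Type) [Fintype W] (H : SimpleGraph W),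
      Fintype.card W = n → KConnected k H → diam H = d → cei H ≤ cei G)
    (u0 ud : V)
    (hdist : G.dist u0 ud = d) :
    {v | G.dist u0 v = d}.ncard = 1 := by
  refine Set.ncard_eq_one.2 ⟨ud, Set.eq_singleton_iff_unique_mem.2 ⟨hdist, fun v hv => ?_⟩⟩
  by_contra hne
  obtain ⟨x, y, hxy, hnadj, b, hb⟩ :=
    (hconn.connected hk).exists_sup_edge_le_dist (by omega) hv hdist hne
  have := dist_sup_edge_lt_of_forall_cei_le hk hconn hdiam (hcard ▸ hmax) hxy hnadj u0 b
  omega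

/-- if `G` maximizes the CEI among `k`-connected graphs of order `n`
with diameter `d` and `u₀ u₁ ⋯ u_d` is a diametral path, then
`A_d = {v : d_G(u₀,v) = d}` consists of a single vertex. -/
theorem last_level_set_singleton {V : Type} [Fintype V] (G : SimpleGraph V) (k d n : ℕ)
    (hk : 1 ≤ k) (hd : 3 ≤ d) (hn : k * (d - 1) + 2 ≤ n)
    (hcard : Fintype.card V = n) (hconn : KConnected k G) (hdiam : diam G = d)
    (hmax : ∀ (W : Type) [Fintype W] (H : SimpleGraph W),
      Fintype.card W = n → KConnected k H → diam H = d → cei H ≤ cei G)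
    (u0 ud : V) (p : G.Walk u0 ud) (hp : p.IsPath) (hplen : p.length = d)
    (hdist : G.dist u0 ud = d) :
    {v | G.dist u0 v = d}.ncard = 1 :=
  last_level_set_singleton_general G k d n hk hd hcard hconn hdiam hmax u0 ud hdist

end CEI
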